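/- Let r ≥ 1, s = (s_1, …, s_r) ∈ ℕ^r, j = (j_1, …, j_r) ∈ J_s, and m ≥ r − 1. Then BC_{q^m − 1}^{s,j} = Π(q^m − 1) · (u_{1 j_1}^{q^m} / L_m^{s_1}) · Σ ∏_{l=2}^{r} (u_{l j_l}^{q^{i_l}} / L_{i_l}^{s_l}), where the sum runs over all integer tuples m > i_2 > ⋯ > i_r ≥ 0; equivalently BC_{q^m − 1}^{s,j} = BC_{q^m − 1}^{(s_1),(j_1)} · Σ_{m > i_2 > ⋯ > i_r ≥ 0} ∏_{l=2}^{r} u_{l j_l}^{q^{i_l}} / L_{i_l}^{s_l}. -/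

import Mathlib

open Polynomial PowerSeries

noncomputable section

namespace Carlitz

variable (F : Type) [Field F] [Fintype F]

/-- `q`, the cardinality of the finite field of constants `𝔽_q`. -/
def q : ℕ := Fintype.card F

/-- The Carlitz polynomial `D_i = ∏_{j=0}^{i-1} (θ^{q^i} - θ^{q^j})` (with `D_0 = 1`). -/
def Dpoly (i : ℕ) : Polynomial F :=
  ∏ j ∈ Finset.range i, (Polynomial.X ^ (q F) ^ i - Polynomial.X ^ (q F) ^ j)

/-- The Carlitz polynomial `L_i = ∏_{j=1}^{i} (θ - θ^{q^j})` (with `L_0 = 1`). -/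
def Lpoly (i : ℕ) : Polynomial F :=
  ∏ j ∈ Finset.range i, (Polynomial.X - Polynomial.X ^ (q F) ^ (j + 1))

/-- The Carlitz factorial `Π(n) = ∏_i D_i^{n_i}` where `n = Σ_i n_i q^i` is the base-`q`
expansion of `n`.  This also equals the Carlitz gamma `Γ_{n+1}`. -/
def cfact (n : ℕ) : Polynomial F :=
  ∏ i ∈ Finset.range (Nat.digits (q F) n).length,
    (Dpoly F i) ^ ((Nat.digits (q F) n).getD i 0)

/-- The inclusion `A = 𝔽_q[θ] → k = 𝔽_q(θ)`. -/
def toK : Polynomial F →+* RatFunc F := algebraMap _ _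

/-- The Carlitz exponential `e_C(z) = Σ_{i≥0} z^{q^i}/D_i` as a power series over `k`. -/
def eC : PowerSeries (RatFunc F) :=
  PowerSeries.mk fun n => ∑ i ∈ Finset.range (n + 1),
    if (q F) ^ i = n then (toK F (Dpoly F i))⁻¹ else 0

/-- The Bernoulli-Carlitz numbers `BC_n`, defined by `Σ_n BC_n z^n/Π(n) = z/e_C(z)`:
since `e_C(z) = z · u(z)` where `u(z) = Σ_m (coeff_{m+1} e_C) z^m` has constant term `1`,
we have `z/e_C(z) = u(z)⁻¹` and `BC_n = Π(n) · coeff_n (u⁻¹)`. -/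
def BCnum (n : ℕ) : RatFunc F :=
  toK F (cfact F n) *
    PowerSeries.coeff (R := RatFunc F) n
      (PowerSeries.mk fun m => PowerSeries.coeff (R := RatFunc F) (m + 1) (eC F))⁻¹

/-- The Stirling-Carlitz numbers of the second kind `{n brace m}_C`, defined by
`Σ_n {n brace m}_C z^n/Π(n) = e_C(z)^m/Π(m)`, i.e. `{n brace m}_C = Π(n)·coeff_n(e_C^m)/Π(m)`. -/
def StC (n m : ℕ) : RatFunc F :=
  toK F (cfact F n) * PowerSeries.coeff (R := RatFunc F) n (eC F ^ m) * (toK F (cfact F m))⁻¹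

/-- The (finite) set of strictly decreasing tuples `i : Fin r → ℕ`,
`i_1 > i_2 > ⋯ > i_r ≥ 0`, with all values `< N`. -/
def decTuples (r N : ℕ) : Finset (Fin r → ℕ) :=
  (Finset.univ.filter fun i : Fin r → Fin N => ∀ a b : Fin r, a < b → i b < i a).image
    fun i l => (i l : ℕ)

/-- The leading (largest) entry `i_1` of a (strictly decreasing) tuple. -/
def lead {r : ℕ} (i : Fin r → ℕ) : ℕ := if h : 0 < r then i ⟨0, h⟩ else 0

/-- The multi-poly-Bernoulli-Carlitz numbers `BC_n^{s,j}`, defined by the generating series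
`Σ_n BC_n^{s,j} z^n/Π(n) = Li_s(e_C(z)·u_{1 j_1}, u_{2 j_2}, …, u_{r j_r})/e_C(z)
 = Σ_{i_1 > ⋯ > i_r ≥ 0} e_C(z)^{q^{i_1}-1} ∏_l u_{l j_l}^{q^{i_l}}/L_{i_l}^{s_l}`,
written out coefficientwise (here `u l` is the datum `u_{l j_l} ∈ A`; the coefficient of
`z^n` in `e_C^{q^{i_1}-1}` vanishes whenever `i_1 > n`, so the sum below is complete). -/
def MPBC {r : ℕ} (s : Fin r → ℕ) (u : Fin r → Polynomial F) (n : ℕ) : RatFunc F :=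
  toK F (cfact F n) * ∑ i ∈ decTuples r (n + 1),
    PowerSeries.coeff (R := RatFunc F) n (eC F ^ ((q F) ^ lead i - 1)) *
      ∏ l, (toK F (u l)) ^ ((q F) ^ (i l)) * ((toK F (Lpoly F (i l))) ^ (s l))⁻¹

/-- The two-variable rational function field `K₂ = 𝔽_q(θ)(t)`. -/
abbrev K2 := RatFunc (RatFunc F)

/-- The inclusion `k = 𝔽_q(θ) → 𝔽_q(θ)(t)`. -/
def liftK : RatFunc F →+* K2 F :=
  (algebraMap (Polynomial (RatFunc F)) (K2 F)).comp Polynomial.C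

/-- The inclusion `A = 𝔽_q[θ] → 𝔽_q(θ)(t)`. -/
def liftA : Polynomial F →+* K2 F := (liftK F).comp (toK F)

/-- The inclusion of constants `𝔽_q → 𝔽_q(θ)(t)`. -/
def liftF : F →+* K2 F := (liftA F).comp Polynomial.C

/-- Substitution `θ ↦ t` on a polynomial `P ∈ 𝔽_q[θ]`, landing in `𝔽_q(θ)(t)`
(where `t` is the outer variable `RatFunc.X`); e.g. `D_i|_{θ=t}`. -/
def subT (P : Polynomial F) : K2 F :=
  Polynomial.eval (RatFunc.X : K2 F) (P.map (liftF F))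

/-- Evaluation of a polynomial in `A[t]` in `𝔽_q(θ)(t)` (coefficients included via
`A → 𝔽_q(θ)`, the variable `t` sent to the outer `RatFunc.X`). -/
def evalAT (h : Polynomial (Polynomial F)) : K2 F :=
  Polynomial.eval (RatFunc.X : K2 F) (h.map (liftA F))

/-- The power series `1 - Σ_{i≥0} (∏_{j=1}^{i}(t^{q^i} - θ^{q^j})/D_i|_{θ=t}) x^{q^i}`
appearing in the definition of the Anderson-Thakur polynomials. -/
def ATgen : PowerSeries (K2 F) :=
  1 - PowerSeries.mk fun m => ∑ i ∈ Finset.range (m + 1),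
    if (q F) ^ i = m then
      (∏ j ∈ Finset.range i,
        ((RatFunc.X : K2 F) ^ (q F) ^ i - (liftK F RatFunc.X) ^ (q F) ^ (j + 1))) *
        (subT F (Dpoly F i))⁻¹
    else 0

/-- `H : ℕ → A[t]` is the family of Anderson-Thakur polynomials iff
`{1 - Σ_i (∏_{j=1}^{i}(t^{q^i} - θ^{q^j})/D_i|_{θ=t}) x^{q^i}}⁻¹ = Σ_n (H_n/Γ_{n+1}|_{θ=t}) x^n`,
i.e. the product of the left-hand factor with the right-hand series equals `1`. -/
def IsATFamily (H : ℕ → Polynomial (Polynomial F)) : Prop :=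
  ATgen F * (PowerSeries.mk fun n => evalAT F (H n) * (subT F (cfact F n))⁻¹) = 1

/-- Reduction of a rational function `x ∈ k` whose denominator is coprime to `℘`
into `A/℘A`: reduce numerator and denominator (in lowest terms) and divide. -/
def redmod (℘ : Polynomial F) (x : RatFunc F) : Polynomial F ⧸ Ideal.span {℘} :=
  Ideal.Quotient.mk (Ideal.span {℘}) x.num *
    Ring.inverse (Ideal.Quotient.mk (Ideal.span {℘}) x.denom)

/-- The finite multiple zeta value `ζ_{𝒜_k}(s)_℘ ∈ A/℘A`: the sum of
`1/(a_1^{s_1} ⋯ a_r^{s_r})` over monic `a_1, …, a_r ∈ A` with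
`deg ℘ > deg a_1 > ⋯ > deg a_r ≥ 0`. -/
def finMZV (℘ : Polynomial F) {r : ℕ} (s : Fin r → ℕ) : Polynomial F ⧸ Ideal.span {℘} :=
  ∑ᶠ a ∈ {a : Fin r → Polynomial F |
      (∀ l, (a l).Monic) ∧ (StrictAnti fun l => (a l).natDegree) ∧
        ∀ l, (a l).natDegree < ℘.natDegree},
    ∏ l, Ring.inverse (Ideal.Quotient.mk (Ideal.span {℘}) (a l) ^ (s l))

/-- The finite Carlitz multiple polylogarithm
`Li_{𝒜_k,s}(u_1, …, u_r)_℘ = Σ_{deg ℘ > i_1 > ⋯ > i_r ≥ 0} u_1^{q^{i_1}} ⋯ u_r^{q^{i_r}}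
/ (L_{i_1}^{s_1} ⋯ L_{i_r}^{s_r}) ∈ A/℘A`. -/
def finCMPL (℘ : Polynomial F) {r : ℕ} (s : Fin r → ℕ) (u : Fin r → Polynomial F) :
    Polynomial F ⧸ Ideal.span {℘} :=
  ∑ i ∈ decTuples r ℘.natDegree,
    ∏ l, Ideal.Quotient.mk (Ideal.span {℘}) (u l) ^ ((q F) ^ (i l)) *
      Ring.inverse (Ideal.Quotient.mk (Ideal.span {℘}) (Lpoly F (i l)) ^ (s l))

end Carlitz

/-!
The Carlitz exponential `e_C = z + Σ_{i ≥ 1} z^{q^i}/D_i` is supported in the degrees `q^i`, and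
`q` is a power of the characteristic. Hence `e_C^{qa+b} = (e_C^a)^q · e_C^b`, where the Frobenius
power `(e_C^a)^q` lives in degrees divisible by `q`, while for `b < q` the only monomial of
`e_C^b` in a degree `≡ -1 (mod q)` is `z^{q-1}`, occurring only for `b = q - 1`. Induction on `m`
shows that the coefficient of `z^{q^m-1}` in `e_C^N` is `1` for `N = q^m - 1` and `0` otherwise
(for `N ≥ q^m` simply because `z ∣ e_C`). So in the generating series
`Σ_{i_1 > ⋯ > i_r} e_C^{q^{i_1}-1} ∏_l u_l^{q^{i_l}}/L_{i_l}^{s_l}` of `BC^{s,j}` only the tuples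
with `i_1 = m` contribute to the coefficient of `z^{q^m-1}`, each exactly once.
-/

namespace PowerSeries

variable {K : Type*} [CommRing K]

theorem coeff_pow_expChar_pow (p : ℕ) [ExpChar K p] (e : ℕ) (f : K⟦X⟧) (n : ℕ) :
    (f ^ p ^ e).coeff n = if p ^ e ∣ n then f.coeff (n / p ^ e) ^ p ^ e else 0 := by
  have hp : p ≠ 0 := expChar_ne_zero K p
  rw [← MvPowerSeries.map_iterateFrobenius_expand p hp f e]
  change (map (iterateFrobenius K p e) (expand (p ^ e) (pow_ne_zero e hp) f)).coeff n = _
  rw [coeff_map, coeff_expand, apply_ite (iterateFrobenius K p e), map_zero,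
    iterateFrobenius_def]

section SupportedOnPowers

variable {q : ℕ} {f : K⟦X⟧} (hq : 1 < q) (hf₁ : f.coeff 1 = 1)
  (hf : ∀ n ∉ Set.range (q ^ ·), f.coeff n = 0)
include hq hf₁ hf

theorem coeff_pow_of_le_mod {d n : ℕ} (hd : d ≤ n % q) :
    (f ^ d).coeff n = if n = d then 1 else 0 := by
  induction d generalizing n with
  | zero => simp [coeff_one]
  | succ d ih =>
    have hn : n % q < q := Nat.mod_lt _ (by omega)
    have hn1 : 0 < n := Nat.pos_of_ne_zero fun h => by simp [h] at hd
    have hpred : (n - 1) % q = n % q - 1 := by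
      rw [show n - 1 = (n % q - 1) + q * (n / q) by have := Nat.div_add_mod n q; omega,
        Nat.add_mul_mod_self_left, Nat.mod_eq_of_lt (by omega)]
    have hvanish : ∀ a b, a + b = n → q ∣ b → (f ^ d).coeff a = 0 := fun a b hab ⟨c, hc⟩ => by
      have ha : a % q = n % q := by rw [← hab, hc, Nat.add_mul_mod_self_left]
      rw [ih (by omega), if_neg]
      rintro rfl
      rw [Nat.mod_eq_of_lt (by omega)] at ha
      omega
    rw [pow_succ, coeff_mul, Finset.sum_eq_single (n - 1, 1)]
    · dsimp only
      rw [ih (by omega), hf₁, mul_one]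
      exact if_congr (by omega) rfl rfl
    · rintro ⟨a, b⟩ hab hne
      rw [Finset.HasAntidiagonal.mem_antidiagonal] at hab
      by_cases hb : b ∈ Set.range (q ^ ·)
      · obtain ⟨_ | i, rfl⟩ := hb
        · exact absurd (Prod.ext (by simp at hab ⊢; omega) (pow_zero q)) hne
        · rw [hvanish a _ hab (dvd_pow_self q i.succ_ne_zero), zero_mul]
      · rw [hf b hb, mul_zero]
    · exact fun h => absurd (Finset.HasAntidiagonal.mem_antidiagonal.2 (Nat.sub_add_cancel hn1)) h

variable {p e : ℕ} [ExpChar K p] (hqp : q = p ^ e)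
include hqp

theorem coeff_pow_mul_pow_of_lt (g : K⟦X⟧) {b : ℕ} (hb : b < q) (M : ℕ) :
    (g ^ q * f ^ b).coeff (q * M + (q - 1)) = g.coeff M ^ q * (f ^ b).coeff (q - 1) := by
  have hfrob (n : ℕ) : (g ^ q).coeff n = if q ∣ n then g.coeff (n / q) ^ q else 0 := by
    subst hqp; exact coeff_pow_expChar_pow p e g n
  rw [coeff_mul, Finset.sum_eq_single (q * M, q - 1)]
  · rw [hfrob, if_pos (dvd_mul_right _ _), Nat.mul_div_cancel_left _ (by omega)]
  · rintro ⟨a, c⟩ hac hne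
    rw [Finset.HasAntidiagonal.mem_antidiagonal] at hac
    dsimp only
    rw [hfrob]
    split_ifs with ha
    · obtain ⟨k, rfl⟩ := ha
      have hc : c % q = q - 1 := by
        have h := congrArg (· % q) hac
        dsimp only at h
        rwa [add_comm (q * k), add_comm (q * M), Nat.add_mul_mod_self_left,
          Nat.add_mul_mod_self_left, Nat.mod_eq_of_lt (by omega : q - 1 < q)] at h
      rw [coeff_pow_of_le_mod hq hf₁ hf (by omega), if_neg, mul_zero]
      rintro rfl
      rw [Nat.mod_eq_of_lt hb] at hc
      exact hne (Prod.ext (by dsimp only; omega) hc)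
    · rw [zero_mul]
  · exact fun h => (h (Finset.HasAntidiagonal.mem_antidiagonal.2 rfl)).elim

theorem coeff_qpow_sub_one_pow_of_le {m N : ℕ} (hN : N ≤ q ^ m - 1) :
    (f ^ N).coeff (q ^ m - 1) = if N = q ^ m - 1 then 1 else 0 := by
  induction m generalizing N with
  | zero => simp_all [coeff_one]
  | succ m ih =>
    have hqm : 1 ≤ q ^ m := Nat.one_le_pow _ _ (by omega)
    have hsucc : q ^ (m + 1) - 1 = q * (q ^ m - 1) + (q - 1) := by
      have := Nat.mul_le_mul_left q hqm
      rw [pow_succ', Nat.mul_sub, mul_one]; omega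
    have hdiv : N / q ≤ q ^ m - 1 := by
      rw [Nat.le_sub_one_iff_lt (by omega), Nat.div_lt_iff_lt_mul (by omega), ← pow_succ]; omega
    have hmod : N % q < q := Nat.mod_lt N (by omega)
    have hdigits : N = q * (q ^ m - 1) + (q - 1) ↔ N / q = q ^ m - 1 ∧ N % q = q - 1 := by
      rw [Nat.div_mod_unique (by omega)]; omega
    have hsplit : f ^ N = (f ^ (N / q)) ^ q * f ^ (N % q) := by
      rw [← pow_mul, ← pow_add, Nat.div_add_mod']
    rw [hsplit, hsucc, coeff_pow_mul_pow_of_lt hq hf₁ hf hqp _ hmod, ih hdiv,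
      coeff_pow_of_le_mod hq hf₁ hf (by rw [Nat.mod_eq_of_lt (by omega : q - 1 < q)]; omega)]
    by_cases h : N / q = q ^ m - 1 ∧ N % q = q - 1
    · rw [if_pos h.1, if_pos h.2.symm, if_pos (hdigits.2 h), one_pow, one_mul]
    · rw [if_neg (mt hdigits.1 h)]
      rcases not_and_or.1 h with h | h
      · rw [if_neg h, zero_pow (by omega), zero_mul]
      · rw [if_neg (Ne.symm h), mul_zero]

theorem coeff_qpow_sub_one_pow_qpow_sub_one (i m : ℕ) :
    (f ^ (q ^ i - 1)).coeff (q ^ m - 1) = if i = m then 1 else 0 := by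
  rcases le_or_gt i m with him | him
  · rw [coeff_qpow_sub_one_pow_of_le hq hf₁ hf hqp
      (Nat.sub_le_sub_right (Nat.pow_le_pow_right (by omega) him) 1)]
    have := Nat.one_le_pow i q (by omega)
    have := Nat.one_le_pow m q (by omega)
    exact if_congr ⟨fun h => Nat.pow_right_injective hq (show q ^ i = q ^ m by omega),
      fun h => h ▸ rfl⟩ rfl rfl
  · have hX : X ∣ f := by
      rw [X_dvd_iff, ← coeff_zero_eq_constantCoeff_apply]
      exact hf 0 fun ⟨i, hi⟩ => (pow_ne_zero i (by omega : q ≠ 0)) hi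
    have hlt : q ^ m < q ^ i := Nat.pow_lt_pow_right hq him
    have := Nat.one_le_pow m q (by omega)
    rw [X_pow_dvd_iff.1 (pow_dvd_pow_of_dvd hX _) _ (by omega), if_neg him.ne']

end SupportedOnPowers

end PowerSeries

namespace Carlitz

variable (F : Type) [Field F] [Fintype F]

theorem one_lt_q : 1 < q F := Fintype.one_lt_card

theorem coeff_eC_one : (eC F).coeff 1 = 1 := by
  simp [eC, Finset.sum_range_succ, Dpoly, (one_lt_q F).ne', toK]

theorem coeff_eC_of_notMem_range {n : ℕ} (hn : n ∉ Set.range (q F ^ ·)) : (eC F).coeff n = 0 := by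
  rw [eC, coeff_mk]
  exact Finset.sum_eq_zero fun i _ => if_neg fun h => hn ⟨i, h⟩

theorem coeff_eC_pow_qpow_sub_one (i m : ℕ) :
    (eC F ^ (q F ^ i - 1)).coeff (q F ^ m - 1) = if i = m then 1 else 0 := by
  obtain ⟨e, hp, he⟩ := FiniteField.card F (ringChar F)
  have : Fact (ringChar F).Prime := ⟨hp⟩
  exact coeff_qpow_sub_one_pow_qpow_sub_one (one_lt_q F) (coeff_eC_one F)
    (fun _ => coeff_eC_of_notMem_range F) he i m

theorem mem_decTuples {r N : ℕ} {i : Fin r → ℕ} :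
    i ∈ decTuples r N ↔ StrictAnti i ∧ ∀ l, i l < N := by
  simp only [decTuples, Finset.mem_image, Finset.mem_filter, Finset.mem_univ, true_and]
  constructor
  · rintro ⟨i, hi, rfl⟩
    exact ⟨fun a b hab => hi a b hab, fun l => (i l).2⟩
  · rintro ⟨hi, hN⟩
    exact ⟨fun l => ⟨i l, hN l⟩, fun a b hab => hi hab, rfl⟩

theorem cons_mem_decTuples_succ {r N a : ℕ} {i : Fin r → ℕ} :
    (Fin.cons a i : Fin (r + 1) → ℕ) ∈ decTuples (r + 1) N ↔ a < N ∧ i ∈ decTuples r a := by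
  rw [mem_decTuples, mem_decTuples, Fin.forall_fin_succ]
  simp only [Fin.cons_zero, Fin.cons_succ]
  have hanti : StrictAnti (Fin.cons a i : Fin (r + 1) → ℕ) ↔ (∀ l, i l < a) ∧ StrictAnti i :=
    Fin.strictMono_cons (α := ℕᵒᵈ)
  rw [hanti]
  constructor
  · rintro ⟨⟨hia, hi⟩, haN, -⟩
    exact ⟨haN, hi, hia⟩
  · rintro ⟨haN, hi, hia⟩
    exact ⟨⟨hia, hi⟩, haN, fun l => (hia l).trans haN⟩

theorem sum_decTuples_succ_filter_head_eq {M : Type*} [AddCommMonoid M] {r N m : ℕ} (hm : m < N)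
    (g : (Fin (r + 1) → ℕ) → M) :
    ∑ i ∈ decTuples (r + 1) N with i 0 = m, g i = ∑ i ∈ decTuples r m, g (Fin.cons m i) := by
  refine Finset.sum_nbij' Fin.tail (fun i => (Fin.cons m i : Fin (r + 1) → ℕ)) ?_ ?_ ?_ ?_ ?_
  · intro i hi
    obtain ⟨hmem, rfl⟩ := Finset.mem_filter.1 hi
    rw [← Fin.cons_self_tail i, cons_mem_decTuples_succ] at hmem
    exact hmem.2
  · intro i hi
    exact Finset.mem_filter.2 ⟨cons_mem_decTuples_succ.2 ⟨hm, hi⟩, rfl⟩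
  · intro i hi
    obtain ⟨-, rfl⟩ := Finset.mem_filter.1 hi
    exact Fin.cons_self_tail i
  · intro i _
    exact Fin.tail_cons (α := fun _ => ℕ) m i
  · intro i hi
    obtain ⟨-, rfl⟩ := Finset.mem_filter.1 hi
    rw [Fin.cons_self_tail]

theorem decTuples_zero (N : ℕ) : decTuples 0 N = {Fin.elim0} :=
  Finset.eq_singleton_iff_unique_mem.2
    ⟨mem_decTuples.2 ⟨fun a => a.elim0, fun l => l.elim0⟩, fun _ _ => Subsingleton.elim _ _⟩

theorem MPBC_qpow_sub_one {r : ℕ} (s : Fin (r + 1) → ℕ) (u : Fin (r + 1) → Polynomial F)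
    (m : ℕ) :
    MPBC F s u (q F ^ m - 1) =
      toK F (cfact F (q F ^ m - 1)) *
        (toK F (u 0) ^ q F ^ m * (toK F (Lpoly F m) ^ s 0)⁻¹) *
        ∑ i ∈ decTuples r m, ∏ l : Fin r,
          toK F (u l.succ) ^ q F ^ i l * (toK F (Lpoly F (i l)) ^ s l.succ)⁻¹ := by
  have hm : m < q F ^ m - 1 + 1 := by
    have := Nat.lt_pow_self (n := m) (one_lt_q F)
    omega
  rw [MPBC, mul_assoc]
  congr 1
  calc _ = ∑ i ∈ decTuples (r + 1) (q F ^ m - 1 + 1) with i 0 = m,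
        ∏ l, toK F (u l) ^ q F ^ i l * (toK F (Lpoly F (i l)) ^ s l)⁻¹ := by
        rw [Finset.sum_filter]
        refine Finset.sum_congr rfl fun i _ => ?_
        rw [lead, dif_pos r.succ_pos, coeff_eC_pow_qpow_sub_one, ite_mul, one_mul, zero_mul]
        rfl
    _ = _ := by
        rw [sum_decTuples_succ_filter_head_eq hm, Finset.mul_sum]
        simp only [Fin.prod_univ_succ, Fin.cons_zero, Fin.cons_succ]

theorem MPBC_qpow_eq (r : ℕ) (hr : 0 < r) (s : Fin r → ℕ) (u : Fin r → Polynomial F) (m : ℕ) :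
    MPBC F s u ((q F) ^ m - 1) =
      toK F (cfact F ((q F) ^ m - 1)) *
        ((toK F (u ⟨0, hr⟩)) ^ ((q F) ^ m) * ((toK F (Lpoly F m)) ^ (s ⟨0, hr⟩))⁻¹) *
        ∑ i ∈ decTuples (r - 1) m,
          ∏ l : Fin (r - 1),
            (toK F (u ⟨l.1 + 1, by have := l.2; omega⟩)) ^ ((q F) ^ (i l)) *
              ((toK F (Lpoly F (i l))) ^ (s ⟨l.1 + 1, by have := l.2; omega⟩))⁻¹ ∧
    MPBC F s u ((q F) ^ m - 1) =
      MPBC F (fun _ : Fin 1 => s ⟨0, hr⟩) (fun _ => u ⟨0, hr⟩) ((q F) ^ m - 1) *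
        ∑ i ∈ decTuples (r - 1) m,
          ∏ l : Fin (r - 1),
            (toK F (u ⟨l.1 + 1, by have := l.2; omega⟩)) ^ ((q F) ^ (i l)) *
              ((toK F (Lpoly F (i l))) ^ (s ⟨l.1 + 1, by have := l.2; omega⟩))⁻¹ := by
  obtain ⟨r, rfl⟩ : ∃ r', r = r' + 1 := ⟨r - 1, by omega⟩
  have hsingle := MPBC_qpow_sub_one F (fun _ : Fin 1 => s 0) (fun _ => u 0) m
  rw [decTuples_zero, Finset.sum_singleton, Fin.prod_univ_zero, mul_one] at hsingle
  exact ⟨MPBC_qpow_sub_one F s u m, hsingle ▸ MPBC_qpow_sub_one F s u m⟩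

end Carlitz
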